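/- Let M be a matroid on a finite ground set E, let w : E → ℝ satisfy the tropical circuit condition, and let B be a maximum-weight basis of M with respect to w. Then for every e ∉ B one has w(e) = min{ w(c) : c ∈ C(e,B), c ≠ e }; that is, every point of the Bergman fan of M lies in the apartment A_B of each of its maximum-weight bases, so the apartments cover the Bergman fan. -/

import Mathlib

open Set

/-- A circuit of a matroid: a minimal dependent set. -/
def MatroidCircuit {α : Type*} (M : Matroid α) (C : Set α) : Prop :=
  M.Dep C ∧ ∀ D ⊆ C, M.Dep D → D = C

/-- `w` satisfies the tropical circuit condition (i.e. lies in the support of the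
Bergman fan of `M`): on every circuit the minimum of `w` is attained by at least two
distinct elements. -/
def TropCircuitCond {α : Type*} (M : Matroid α) (w : α → ℝ) : Prop :=
  ∀ C, MatroidCircuit M C →
    ∃ x ∈ C, ∃ y ∈ C, x ≠ y ∧ w x = w y ∧ ∀ c ∈ C, w x ≤ w c

/-- The fundamental circuit of `e` with respect to a basis `B`: the unique circuit
contained in `B ∪ {e}` (expressed as an intersection, which equals that circuit by
uniqueness). -/
def fundCircuit {α : Type*} (M : Matroid α) (B : Set α) (e : α) : Set α :=
  ⋂₀ {C | MatroidCircuit M C ∧ e ∈ C ∧ C ⊆ insert e B}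

/-- Every finite dependent set contains a circuit. -/
lemma exists_circuit_subset {α : Type*} [Fintype α] (M : Matroid α) :
    ∀ X : Set α, M.Dep X → ∃ C ⊆ X, MatroidCircuit M C := by
  have key : ∀ n (X : Set α), X.ncard ≤ n → M.Dep X → ∃ C ⊆ X, MatroidCircuit M C := by
    intro n
    induction n with
    | zero =>
      intro X hX hdep
      refine ⟨X, subset_rfl, hdep, fun D hD hDdep => ?_⟩
      have : X = ∅ := by
        rw [← Set.ncard_eq_zero (Set.toFinite X)]; omega
      subst this
      exact (Set.subset_empty_iff.mp hD) ▸ (Set.subset_empty_iff.mp hD).symm ▸ rfl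
    | succ n ih =>
      intro X hX hdep
      by_cases h : ∃ D, D ⊂ X ∧ M.Dep D
      · obtain ⟨D, hDX, hDdep⟩ := h
        have : D.ncard < X.ncard := Set.ncard_lt_ncard hDX (Set.toFinite X)
        obtain ⟨C, hCD, hC⟩ := ih D (by omega) hDdep
        exact ⟨C, hCD.trans hDX.subset, hC⟩
      · refine ⟨X, subset_rfl, hdep, fun D hD hDdep => ?_⟩
        by_contra hne
        exact h ⟨D, ⟨hD, fun hsub => hne (hD.antisymm hsub)⟩, hDdep⟩
  intro X hdep
  exact key X.ncard X le_rfl hdep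

/-- Removing any element from a circuit yields an independent set. -/
lemma circuit_diff_indep {α : Type*} {M : Matroid α} {C : Set α} (hC : MatroidCircuit M C)
    {x : α} (hx : x ∈ C) : M.Indep (C \ {x}) := by
  rw [← Matroid.not_dep_iff (diff_subset.trans hC.1.subset_ground)]
  intro hdep
  have := hC.2 _ diff_subset hdep
  exact (this ▸ (fun h : x ∈ C \ {x} => h.2 rfl)) (this ▸ hx)

/-- There is at most one circuit contained in `insert e B` for an independent set `B`. -/
lemma circuit_unique_in_insert {α : Type*} {M : Matroid α} {B : Set α} (hB : M.Indep B)
    {e : α} (he : e ∉ B) {C₁ C₂ : Set α} (h₁ : MatroidCircuit M C₁) (h₂ : MatroidCircuit M C₂)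
    (hs₁ : C₁ ⊆ insert e B) (hs₂ : C₂ ⊆ insert e B) : C₁ = C₂ := by
  have hec : ∀ C : Set α, MatroidCircuit M C → C ⊆ insert e B → e ∈ C := by
    intro C hC hCs
    by_contra hne
    have : C ⊆ B := fun x hx => (hCs hx).resolve_left (fun h => hne (h ▸ hx))
    exact (hB.subset this).not_dep hC.1
  have key : ∀ C₁ C₂ : Set α, MatroidCircuit M C₁ → MatroidCircuit M C₂ →
      C₁ ⊆ insert e B → C₂ ⊆ insert e B → C₁ ⊆ C₂ := by
    intro C₁ C₂ h₁ h₂ hs₁ hs₂ x hx₁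
    by_contra hx₂
    have he₁ : e ∈ C₁ := hec _ h₁ hs₁
    have he₂ : e ∈ C₂ := hec _ h₂ hs₂
    have hxe : x ≠ e := fun h => hx₂ (h ▸ he₂)
    have hxB : x ∈ B := (hs₁ hx₁).resolve_left hxe
    have hi₂ : M.Indep (C₂ \ {e}) := circuit_diff_indep h₂ he₂
    have hecl : e ∈ M.closure (C₂ \ {e}) := by
      rw [hi₂.mem_closure_iff_of_notMem (fun h => h.2 rfl)]
      rw [Set.insert_diff_singleton, Set.insert_eq_of_mem he₂]; exact h₂.1
    have hsub₂ : C₂ \ {e} ⊆ B \ {x} := by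
      rintro y ⟨hy, hye⟩
      exact ⟨(hs₂ hy).resolve_left hye, fun h => hx₂ (h ▸ hy)⟩
    have heclB : e ∈ M.closure (B \ {x}) := M.closure_subset_closure hsub₂ hecl
    have hi₁ : M.Indep (C₁ \ {x}) := circuit_diff_indep h₁ hx₁
    have hxcl : x ∈ M.closure (C₁ \ {x}) := by
      rw [hi₁.mem_closure_iff_of_notMem (fun h => h.2 rfl)]
      rw [Set.insert_diff_singleton, Set.insert_eq_of_mem hx₁]; exact h₁.1
    have hsub₁ : C₁ \ {x} ⊆ M.closure (B \ {x}) := by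
      rintro y ⟨hy, hyx⟩
      rcases hs₁ hy with rfl | hyB
      · exact heclB
      · exact M.subset_closure (B \ {x}) ((diff_subset.trans hB.subset_ground))
          ⟨hyB, hyx⟩
    have : x ∈ M.closure (B \ {x}) :=
      (M.closure_subset_closure_of_subset_closure hsub₁) hxcl
    exact hB.notMem_closure_sdiff_of_mem hxB this
  exact (key C₁ C₂ h₁ h₂ hs₁ hs₂).antisymm (key C₂ C₁ h₂ h₁ hs₂ hs₁)

/-- every point `w` of the Bergman fan lies in the apartment of each of
its maximum-weight bases `B`: for every `e ∉ B`,
`w e = min { w c : c ∈ C(e,B), c ≠ e }`. So the apartments cover the Bergman fan. -/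
theorem bergman_point_in_maxweight_apartment {α : Type*} [Fintype α] (M : Matroid α)
    (hE : M.E = Set.univ) (w : α → ℝ) (hw : TropCircuitCond M w)
    (B : Set α) (hB : M.IsBase B)
    (hmax : ∀ B', M.IsBase B' → ∑ b ∈ (Set.toFinite B').toFinset, w b ≤
      ∑ b ∈ (Set.toFinite B).toFinset, w b) :
    ∀ e, e ∉ B → w e = sInf (w '' (fundCircuit M B e \ {e})) := by
  classical
  intro e heB
  have heE : e ∈ M.E := hE ▸ Set.mem_univ e
  have hdep : M.Dep (insert e B) := hB.insert_dep ⟨heE, heB⟩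
  obtain ⟨C₀, hC₀s, hC₀⟩ := exists_circuit_subset M _ hdep
  have heC₀ : e ∈ C₀ := by
    by_contra hne
    have hsubB : C₀ ⊆ B := fun x hx => (hC₀s hx).resolve_left (fun h => hne (h ▸ hx))
    exact (hB.indep.subset hsubB).not_dep hC₀.1
  have hfund : fundCircuit M B e = C₀ := by
    apply subset_antisymm
    · exact sInter_subset_of_mem ⟨hC₀, heC₀, hC₀s⟩
    · intro x hx
      rw [fundCircuit, mem_sInter]
      rintro C ⟨hCc, heC, hCs⟩
      exact (circuit_unique_in_insert hB.indep heB hC₀ hCc hC₀s hCs) ▸ hx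
  have hex : ∀ c ∈ C₀ \ {e}, w e ≤ w c := by
    rintro c ⟨hcC, hce'⟩
    have hce : c ≠ e := hce'
    have hcB : c ∈ B := (hC₀s hcC).resolve_left hce
    have hind : M.Indep (insert e (B \ {c})) := by
      rw [← Matroid.not_dep_iff (by rw [hE]; exact Set.subset_univ _)]
      intro hdep'
      obtain ⟨C', hC's, hC'⟩ := exists_circuit_subset M _ hdep'
      have hsub : C' ⊆ insert e B := hC's.trans (insert_subset_insert diff_subset)
      have heq := circuit_unique_in_insert hB.indep heB hC' hC₀ hsub hC₀s
      have hcC' : c ∈ C' := heq ▸ hcC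
      rcases hC's hcC' with h | h
      · exact hce h
      · exact h.2 rfl
    have hB' : M.IsBase (insert e (B \ {c})) := hB.exchange_isBase_of_indep heB hind
    have hle := hmax _ hB'
    rw [Set.toFinite_toFinset, Set.toFinite_toFinset, Set.toFinset_insert, Set.toFinset_diff,
      Set.toFinset_singleton, Finset.sum_insert (by simp [heB])] at hle
    rw [Finset.sdiff_singleton_eq_erase, Finset.sum_erase_eq_sub (by simp [hcB])] at hle
    linarith
  obtain ⟨x, hxC, y, hyC, hxy, hxyeq, hmin⟩ := hw C₀ hC₀
  have hzex : ∃ z ∈ C₀ \ {e}, w z ≤ w e := by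
    by_cases hxe : x = e
    · refine ⟨y, ⟨hyC, fun h => hxy ?_⟩, le_of_eq (hxyeq ▸ hxe ▸ rfl)⟩
      rw [Set.mem_singleton_iff] at h
      rw [hxe, h]
    · exact ⟨x, ⟨hxC, hxe⟩, hmin e heC₀⟩
  obtain ⟨z, hz, hzle⟩ := hzex
  rw [hfund]
  have hne : (w '' (C₀ \ {e})).Nonempty := ⟨w z, ⟨z, hz, rfl⟩⟩
  have hbdd : BddBelow (w '' (C₀ \ {e})) := (Set.toFinite _).bddBelow
  apply le_antisymm
  · exact le_csInf hne (by rintro r ⟨c, hc, rfl⟩; exact hex c hc)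
  · exact (csInf_le hbdd ⟨z, hz, rfl⟩).trans hzle
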